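/- Let G be a graph and let G' be obtained from G by the following construction: V(G') = {w_v : v ∈ V(G)} ∪ {t¹_e, t²_e, b¹_e, b²_e : e ∈ E(G)} ∪ {c₁, c₂}, with edges: for each edge e = uv of G, edges w_u t¹_e, t¹_e t²_e, t²_e w_v, w_u b¹_e, b¹_e b²_e, b²_e w_v; additionally c₁ adjacent to all t-vertices, c₂ adjacent to all b-vertices, and c₁ adjacent to c₂. Then G admits a proper 3-coloring if and only if G' admits a proper 3-coloring. -/

import Mathlib

/-- Vertex set of the enhanced graph `G'`: a vertex `w_v` for each vertex `v` of `G`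
(`Sum.inl v`), four vertices `t¹_e, t²_e, b¹_e, b²_e` for each edge `e` of `G`
(`Sum.inr (Sum.inl (e, tb, i))` where `tb = false` means a `t`-vertex, `tb = true` a
`b`-vertex, and `i : Bool` distinguishes the superscripts 1/2), and two special vertices
`c₁, c₂` (`Sum.inr (Sum.inr 0)` and `Sum.inr (Sum.inr 1)`). -/
def EnhVert (V E : Type*) := V ⊕ ((E × Bool × Bool) ⊕ (Fin 2))

/-- Base relation generating the edges of the enhanced graph `G'`, given an orientation
`fst, snd` of each edge `e = (fst e, snd e)` of `G`: for each edge `e = uv`, the paths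
`w_u — t¹_e — t²_e — w_v` and `w_u — b¹_e — b²_e — w_v`; moreover `c₁` is adjacent to all
`t`-vertices, `c₂` to all `b`-vertices, and `c₁` to `c₂`. -/
def enhRel {V : Type*} (G : SimpleGraph V) (fst snd : G.edgeSet → V) :
    EnhVert V G.edgeSet → EnhVert V G.edgeSet → Prop
  | Sum.inl u, Sum.inr (Sum.inl (e, _, i)) =>
      (i = false ∧ u = fst e) ∨ (i = true ∧ u = snd e)
  | Sum.inr (Sum.inl (e, tb, i)), Sum.inr (Sum.inl (e', tb', i')) =>
      e = e' ∧ tb = tb' ∧ i ≠ i'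
  | Sum.inr (Sum.inl (_, tb, _)), Sum.inr (Sum.inr c) =>
      (tb = false ∧ c = 0) ∨ (tb = true ∧ c = 1)
  | Sum.inr (Sum.inr _), Sum.inr (Sum.inr _) => True
  | _, _ => False

/-!
Colour `c₁, c₂` with `0, 1`. For an edge `uv` with `w_u, w_v` coloured differently, each of the
two detours `w_u — p — q — w_v` can be coloured with the two colours other than its hub's colour.
Conversely, if `w_u` and `w_v` had the same colour `x`, the two internal vertices of a detour
would carry two distinct colours different from `x` and from the hub's colour; with three colours
this forces the hub to have colour `x`, for both hubs `c₁` and `c₂`, which are adjacent.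
-/

open SimpleGraph

/-- `p false, p true` properly colour the inner vertices of a detour `w_u — t¹_e — t²_e — w_v`
(or `w_u — b¹_e — b²_e — w_v`) where `w_u, w_v` have colours `x, y` and the hub joined to both
inner vertices has colour `h`. -/
def IsProperDetour {α : Type*} (x y h : α) (p : Bool → α) : Prop :=
  p false ≠ x ∧ p true ≠ y ∧ p false ≠ p true ∧ ∀ i, p i ≠ h

lemma exists_isProperDetour (x y h : Fin 3) (hxy : x ≠ y) : ∃ p, IsProperDetour x y h p := by
  unfold IsProperDetour
  revert x y h
  decide

lemma IsProperDetour.eq_of_card_le_three {α : Type*} [Fintype α] [DecidableEq α]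
    (hα : Fintype.card α ≤ 3) {x h : α} {p : Bool → α} (hp : IsProperDetour x x h p) :
    x = h := by
  obtain ⟨hx₀, hx₁, hp₀₁, hh⟩ := hp
  by_contra hxh
  have hcard : ({x, h, p false, p true} : Finset α).card = 4 := by
    rw [Finset.card_insert_of_notMem, Finset.card_insert_of_notMem, Finset.card_pair hp₀₁]
    · simp [(hh false).symm, (hh true).symm]
    · simp [hxh, hx₀.symm, hx₁.symm]
  have := hcard ▸ Finset.card_le_univ ({x, h, p false, p true} : Finset α)
  omega

section Gadget

variable {V : Type*} {G : SimpleGraph V} {fst snd : G.edgeSet → V} {α : Type*}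

/-- `enhHub false = c₁` is joined to the `t`-vertices, `enhHub true = c₂` to the `b`-vertices. -/
abbrev enhHub (V E : Type*) (tb : Bool) : EnhVert V E := Sum.inr (Sum.inr (bif tb then 1 else 0))

abbrev enhGadget (V : Type*) {E : Type*} (e : E) (tb i : Bool) : EnhVert V E :=
  Sum.inr (Sum.inl (e, tb, i))

lemma ne_of_enhRel {f : EnhVert V G.edgeSet → α}
    (hhub : f (enhHub V _ false) ≠ f (enhHub V _ true))
    (hdet : ∀ e tb, IsProperDetour (f (Sum.inl (fst e))) (f (Sum.inl (snd e)))
      (f (enhHub V _ tb)) (fun i => f (enhGadget V e tb i)))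
    {a b : EnhVert V G.edgeSet} (hab : a ≠ b) (h : enhRel G fst snd a b) : f a ≠ f b := by
  rcases a with u | ⟨e, tb, i⟩ | k <;> rcases b with u' | ⟨e', tb', i'⟩ | k' <;>
    simp only [enhRel] at h
  · obtain ⟨hx, hy, -, -⟩ := hdet e' tb'
    rcases h with ⟨rfl, rfl⟩ | ⟨rfl, rfl⟩
    exacts [hx.symm, hy.symm]
  · obtain ⟨rfl, rfl, hi⟩ := h
    obtain ⟨-, -, hpq, -⟩ := hdet e tb
    cases i <;> cases i' <;> first | exact absurd rfl hi | exact hpq | exact hpq.symm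
  · rcases h with ⟨rfl, rfl⟩ | ⟨rfl, rfl⟩
    exacts [(hdet e false).2.2.2 i, (hdet e true).2.2.2 i]
  · fin_cases k <;> fin_cases k' <;> first | exact absurd rfl hab | exact hhub | exact hhub.symm

lemma forall_adj_fromRel_enhRel_ne_iff (f : EnhVert V G.edgeSet → α) :
    (∀ {a b}, (fromRel (enhRel G fst snd)).Adj a b → f a ≠ f b) ↔
      f (enhHub V _ false) ≠ f (enhHub V _ true) ∧
      ∀ e tb, IsProperDetour (f (Sum.inl (fst e))) (f (Sum.inl (snd e)))
        (f (enhHub V _ tb)) (fun i => f (enhGadget V e tb i)) := by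
  constructor
  · intro hf
    have hrel {a b} (hab : a ≠ b) (h : enhRel G fst snd a b) : f a ≠ f b :=
      hf ((fromRel_adj _ _ _).2 ⟨hab, Or.inl h⟩)
    refine ⟨hrel (Sum.inr_injective.ne (Sum.inr_injective.ne (by decide))) trivial,
      fun e tb => ⟨?_, ?_, ?_, fun i => ?_⟩⟩
    · exact Ne.symm (hrel Sum.inl_ne_inr (Or.inl ⟨rfl, rfl⟩))
    · exact Ne.symm (hrel Sum.inl_ne_inr (Or.inr ⟨rfl, rfl⟩))
    · exact hrel (Sum.inr_injective.ne (Sum.inl_injective.ne (by simp))) ⟨rfl, rfl, by decide⟩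
    · exact hrel (Sum.inr_injective.ne Sum.inl_ne_inr) (by cases tb <;> simp [enhRel])
  · rintro ⟨hhub, hdet⟩ a b hab
    rw [fromRel_adj] at hab
    obtain ⟨hne, h | h⟩ := hab
    exacts [ne_of_enhRel hhub hdet hne h, (ne_of_enhRel hhub hdet hne.symm h).symm]

end Gadget

lemma ne_of_adj_of_forall_edgeSet {V α : Type*} {G : SimpleGraph V} {fst snd : G.edgeSet → V}
    (hends : ∀ e : G.edgeSet, (e : Sym2 V) = s(fst e, snd e)) {f : V → α}
    (hf : ∀ e, f (fst e) ≠ f (snd e)) {u v : V} (huv : G.Adj u v) : f u ≠ f v := by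
  have h := hf ⟨s(u, v), huv⟩
  rcases Sym2.eq_iff.1 (hends ⟨s(u, v), huv⟩) with ⟨hu, hv⟩ | ⟨hu, hv⟩
  · rwa [← hu, ← hv] at h
  · rw [← hu, ← hv] at h
    exact h.symm

/-- `G` admits a proper 3-coloring if and only if the enhanced graph `G'`
(obtained by the gadget construction `enhRel`) admits a proper 3-coloring. -/
theorem stmt3 {V : Type*} (G : SimpleGraph V) (fst snd : G.edgeSet → V)
    (hends : ∀ e : G.edgeSet, (e : Sym2 V) = s(fst e, snd e)) :
    G.Colorable 3 ↔ (SimpleGraph.fromRel (enhRel G fst snd)).Colorable 3 := by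
  constructor
  · rintro ⟨c⟩
    have hadj (e : G.edgeSet) : G.Adj (fst e) (snd e) := G.mem_edgeSet.1 (hends e ▸ e.2)
    choose p hp using fun e tb => exists_isProperDetour (c (fst e)) (c (snd e))
      (bif tb then 1 else 0 : Fin 2).castSucc (c.valid (hadj e))
    let f : EnhVert V G.edgeSet → Fin 3 :=
      Sum.elim c (Sum.elim (fun x => p x.1 x.2.1 x.2.2) Fin.castSucc)
    exact ⟨.mk f ((forall_adj_fromRel_enhRel_ne_iff (fst := fst) (snd := snd) f).2
      ⟨by simp [f], hp⟩)⟩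
  · rintro ⟨d⟩
    obtain ⟨hhub, hdet⟩ := (forall_adj_fromRel_enhRel_ne_iff d).1 d.valid
    refine ⟨.mk (d ∘ Sum.inl) (ne_of_adj_of_forall_edgeSet hends
      fun e (heq : d (Sum.inl (fst e)) = d (Sum.inl (snd e))) => hhub ?_)⟩
    have hhub_eq (tb : Bool) : d (Sum.inl (snd e)) = d (enhHub V _ tb) :=
      (heq ▸ hdet e tb).eq_of_card_le_three (by simp)
    exact (hhub_eq false).symm.trans (hhub_eq true)
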